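/- arXiv:2309.00182 — 2 statements merged into one kernel-verified Lean document; each statement's English description precedes it below -/
import Mathlib

section
/- For every integer ℓ ≥ 3 and every n ≥ 2ℓ, there exists an edge-coloring of K_n using exactly binom(n,2) − H⁽⁴⁾(n; 2ℓ, ℓ−1) colors in which every set of 2ℓ vertices spans at least binom(2ℓ,2) − ℓ + 2 distinct colors, every color is used on at most two edges, and no two edges sharing a vertex receive the same color. In particular, f(n, 2ℓ, binom(2ℓ,2) − ℓ + 2) ≤ binom(n,2) − H⁽⁴⁾(n; 2ℓ, ℓ−1). -/
open Finset

/-- The set of colors used by the edge-coloring `χ` on the edges (2-element subsets)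
contained in the vertex set `S`. -/
def colorsIn {n : ℕ} {α : Type*} [DecidableEq α]
    (χ : Finset (Fin n) → α) (S : Finset (Fin n)) : Finset α :=
  (S.powersetCard 2).image χ

/-- The generalized Ramsey number `f(n,p,q)`: the minimum number of colors in an
edge-coloring of `K_n` such that every set of `p` vertices spans at least `q` colors. -/
noncomputable def genRamsey (n p q : ℕ) : ℕ :=
  sInf {C : ℕ | ∃ χ : Finset (Fin n) → Fin C,
    ∀ S : Finset (Fin n), S.card = p → q ≤ (colorsIn χ S).card}

/-- A hypergraph (edge set `E`) on vertex set `Fin n` is `(s,k)`-free if every set of `s`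
vertices contains at most `k - 1` (i.e. fewer than `k`) edges. -/
def IsSKFree {n : ℕ} (s k : ℕ) (E : Finset (Finset (Fin n))) : Prop :=
  ∀ S : Finset (Fin n), S.card = s → (E.filter (fun e => e ⊆ S)).card < k

/-- `F^(r)(n; s, k)`: the maximum number of edges in an `(s,k)`-free `r`-uniform
hypergraph on `n` vertices. -/
noncomputable def Fval (r n s k : ℕ) : ℕ :=
  sSup {m : ℕ | ∃ E : Finset (Finset (Fin n)),
    (∀ e ∈ E, e.card = r) ∧ IsSKFree s k E ∧ E.card = m}

/-- `G^(r)(n; s, k)`: the maximum number of edges, counted with multiplicity, in an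
`r`-uniform multi-hypergraph (multiplicity function `μ`) on `n` vertices in which every
set of `s` vertices contains, with multiplicity, at most `k - 1` edges. -/
noncomputable def Gval (r n s k : ℕ) : ℕ :=
  sSup {m : ℕ | ∃ μ : Finset (Fin n) → ℕ,
    (∀ e, μ e ≠ 0 → e.card = r) ∧
    (∀ S : Finset (Fin n), S.card = s → ∑ e ∈ S.powersetCard r, μ e < k) ∧
    ∑ e ∈ (univ : Finset (Fin n)).powersetCard r, μ e = m}

/-- `H^(4)(n; 2ℓ, ℓ-1)`: the maximum number of edges of a 4-uniform hypergraph on `n`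
vertices that is `(2ℓ, ℓ-1)`-free, is `(2i+1, i)`-free for all `2 ≤ i ≤ ℓ-2`, and in
which every vertex has degree `0` or degree at least `ℓ-1`. -/
noncomputable def Hval (n ℓ : ℕ) : ℕ :=
  sSup {m : ℕ | ∃ E : Finset (Finset (Fin n)),
    (∀ e ∈ E, e.card = 4) ∧
    IsSKFree (2 * ℓ) (ℓ - 1) E ∧
    (∀ i, 2 ≤ i → i ≤ ℓ - 2 → IsSKFree (2 * i + 1) i E) ∧
    (∀ v : Fin n, (E.filter (fun e => v ∈ e)).card = 0 ∨
      ℓ - 1 ≤ (E.filter (fun e => v ∈ e)).card) ∧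
    E.card = m}


/-! Take an extremal hypergraph `E` for `H⁽⁴⁾(n; 2ℓ, ℓ-1)`, split every edge `e ∈ E` into two
disjoint pairs and give these two pairs one common color, every other pair of `K_n` getting a
color of its own. This uses `C(n,2) - |E|` colors, every color class is a single pair or two
disjoint pairs, and a `2ℓ`-set `S` loses exactly one color for each edge inside `S`, of which
there are at most `ℓ - 2`.

The splits must be chosen so that no pair is a half of two different edges. Freeness forces two
edges to share at most two vertices, bounds the length of a chain of edges consecutively sharing
pairs by `ℓ - 2`, and forbids an edge to meet such a chain in two different pairs (`j` edges
would then span at most `2j + 1` vertices). Hence the end `e` of a maximal chain meets all other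
edges in one and the same pair `p`; splitting `e` avoiding `p` and recursing on the remaining
edges gives the splits. -/

theorem IsSKFree.card_lt_card {n s k : ℕ} {E F : Finset (Finset (Fin n))} {W : Finset (Fin n)}
    (hE : IsSKFree s k E) (hs : s ≤ n) (hFE : F ⊆ E) (hFW : ∀ f ∈ F, f ⊆ W)
    (hk : k ≤ F.card) : s < W.card := by
  by_contra! hW
  obtain ⟨S, hWS, hS⟩ := exists_superset_card_eq hW (by simpa using hs)
  have hF : F ⊆ E.filter (· ⊆ S) := fun f hf => mem_filter.mpr ⟨hFE hf, (hFW f hf).trans hWS⟩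
  have := card_le_card hF
  have := hE S hS
  omega

section Chain
variable {α : Type*}

theorem exists_isChain_nodup_closed {r : α → α → Prop} {F : Finset α} (hF : F.Nonempty) :
    ∃ e L, (e :: L).IsChain r ∧ (e :: L).Nodup ∧ (∀ x ∈ e :: L, x ∈ F) ∧
      ∀ f ∈ F, r f e → f ∈ e :: L := by
  by_contra! h
  have hlong : ∀ k, ∃ e L, (e :: L).IsChain r ∧ (e :: L).Nodup ∧ (∀ x ∈ e :: L, x ∈ F) ∧
      L.length = k := by
    intro k
    induction k with
    | zero =>
      obtain ⟨e, he⟩ := hF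
      exact ⟨e, [], List.isChain_singleton e, List.nodup_singleton e, by simpa using he, rfl⟩
    | succ k ih =>
      obtain ⟨e, L, hL, hnd, hLF, hlen⟩ := ih
      obtain ⟨f, hf, hfe, hfL⟩ := h e L hL hnd hLF
      refine ⟨f, e :: L, List.isChain_cons_cons.mpr ⟨hfe, hL⟩, List.nodup_cons.mpr ⟨hfL, hnd⟩,
        ?_, by simp [hlen]⟩
      exact fun x hx => (List.mem_cons.mp hx).elim (· ▸ hf) (hLF x)
  classical
  obtain ⟨e, L, -, hnd, hLF, hlen⟩ := hlong F.card
  have := card_le_card fun x (hx : x ∈ (e :: L).toFinset) => hLF x (List.mem_toFinset.mp hx)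
  rw [List.toFinset_card_of_nodup hnd, List.length_cons] at this
  omega

end Chain

section Spread
variable {α : Type*} [DecidableEq α]

structure IsSpread (ℓ : ℕ) (E : Finset (Finset α)) : Prop where
  card_eq : ∀ e ∈ E, e.card = 4
  card_sup_ge : ∀ F ⊆ E, 2 ≤ F.card → F.card ≤ ℓ - 1 → 2 * F.card + 2 ≤ (F.sup id).card
  card_sup_gt : ∀ F ⊆ E, F.card = ℓ - 1 → 2 * ℓ < (F.sup id).card

def Overlap (a b : Finset α) : Prop := 2 ≤ (a ∩ b).card

theorem Overlap.symm {a b : Finset α} (h : Overlap a b) : Overlap b a := by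
  rwa [Overlap, inter_comm]

theorem card_sup_le_of_isChain {L : List (Finset α)} (hL : L.IsChain Overlap)
    (h4 : ∀ x ∈ L, x.card = 4) : (L.toFinset.sup id).card ≤ 2 * L.length + 2 := by
  induction L with
  | nil => simp
  | cons x L ih =>
    cases L with
    | nil => simp [h4 x (by simp)]
    | cons y L =>
      rw [List.isChain_cons_cons] at hL
      have hy : y ⊆ (y :: L).toFinset.sup id := le_sup (f := id) (by simp)
      have hxy : (x \ y).card ≤ 2 := by
        have := card_sdiff_add_card_inter x y
        have : 2 ≤ (x ∩ y).card := hL.1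
        have := h4 x (by simp)
        omega
      have hsd : (x \ (y :: L).toFinset.sup id).card ≤ 2 :=
        (card_le_card (sdiff_subset_sdiff le_rfl hy)).trans hxy
      have := ih hL.2 fun z hz => h4 z (List.mem_cons_of_mem x hz)
      have := card_sdiff_add_card x ((y :: L).toFinset.sup id)
      simp only [List.toFinset_cons, sup_insert, id, sup_eq_union, List.length_cons] at *
      omega

end Spread

theorem isSpread_of_isSKFree {n ℓ : ℕ} {E : Finset (Finset (Fin n))} (hn : 2 * ℓ ≤ n)
    (h4 : ∀ e ∈ E, e.card = 4) (hfree : IsSKFree (2 * ℓ) (ℓ - 1) E)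
    (hfree' : ∀ i, 2 ≤ i → i ≤ ℓ - 2 → IsSKFree (2 * i + 1) i E) : IsSpread ℓ E where
  card_eq := h4
  card_sup_ge F hFE h2 hF := by
    have hsup : ∀ f ∈ F, f ⊆ F.sup id := fun f hf => le_sup (f := id) hf
    rcases (show F.card ≤ ℓ - 2 ∨ F.card = ℓ - 1 by omega) with h | h
    · have := (hfree' _ h2 h).card_lt_card (by omega) hFE hsup le_rfl
      omega
    · have := hfree.card_lt_card hn hFE hsup h.ge
      omega
  card_sup_gt F hFE hF := hfree.card_lt_card hn hFE (fun f hf => le_sup (f := id) hf) hF.ge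

namespace IsSpread
variable {α : Type*} [DecidableEq α] {ℓ : ℕ} {E : Finset (Finset α)}

theorem card_inter_eq_two (hE : IsSpread ℓ E) (hℓ : 3 ≤ ℓ) {e f : Finset α} (he : e ∈ E)
    (hf : f ∈ E) (hef : e ≠ f) (h : Overlap e f) : (e ∩ f).card = 2 := by
  have hpair : ({e, f} : Finset (Finset α)).card = 2 := card_pair hef
  have := hE.card_sup_ge {e, f} (by simp [insert_subset_iff, he, hf]) hpair.ge (by omega)
  have := card_union_add_card_inter e f
  have := hE.card_eq e he
  have := hE.card_eq f hf
  have : 2 ≤ (e ∩ f).card := h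
  simp only [hpair, sup_insert, sup_singleton, id, sup_eq_union] at *
  omega

theorem length_le_of_isChain (hE : IsSpread ℓ E) {L : List (Finset α)} (hL : L.IsChain Overlap)
    (hnd : L.Nodup) (hLE : ∀ x ∈ L, x ∈ E) : L.length ≤ ℓ - 2 := by
  by_contra! hlen
  have hℓ : 0 < ℓ := Nat.pos_of_ne_zero fun h => by
    simpa [h] using hE.card_sup_gt ∅ (empty_subset _)
  have hL' : (L.take (ℓ - 1)).length = ℓ - 1 := by simp; omega
  have hsub : ∀ x ∈ L.take (ℓ - 1), x ∈ L := fun x hx => List.mem_of_mem_take hx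
  have hcard : (L.take (ℓ - 1)).toFinset.card = ℓ - 1 := by
    rw [List.toFinset_card_of_nodup ((List.take_sublist _ _).nodup hnd), hL']
  have hgt := hE.card_sup_gt _ (fun x hx => hLE x (hsub x (List.mem_toFinset.mp hx))) hcard
  have hle := card_sup_le_of_isChain (hL.take _) fun x hx => hE.card_eq x (hLE x (hsub x hx))
  omega

theorem inter_eq_of_isChain (hE : IsSpread ℓ E) (hℓ : 3 ≤ ℓ) {e t f : Finset α}
    {T : List (Finset α)} (hL : (e :: t :: T).IsChain Overlap) (hnd : (e :: t :: T).Nodup)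
    (hLE : ∀ x ∈ e :: t :: T, x ∈ E) (hf : f ∈ t :: T) (hef : Overlap e f) :
    e ∩ f = e ∩ t := by
  by_contra hne
  have heL : e ∉ t :: T := (List.nodup_cons.mp hnd).1
  have he := hLE e (by simp)
  have hft := hE.card_inter_eq_two hℓ he (hLE f (by simp [hf])) (fun h => heL (h ▸ hf)) hef
  have htt := hE.card_inter_eq_two hℓ he (hLE t (by simp)) (fun h => heL (h ▸ by simp))
    (List.isChain_cons_cons.mp hL).1
  -- two distinct pairs of `e` lie in the rest of the chain, so `e` adds at most one new vertex
  have hthree : 3 ≤ (e ∩ f ∪ e ∩ t).card := by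
    by_contra! h
    exact hne ((eq_of_subset_of_card_le subset_union_left (by omega)).trans
      (eq_of_subset_of_card_le subset_union_right (by omega)).symm)
  set U := (t :: T).toFinset.sup id
  have hsub : e ∩ f ∪ e ∩ t ⊆ e ∩ U := by
    have hfU : f ⊆ U := le_sup (f := id) (List.mem_toFinset.mpr hf)
    have htU : t ⊆ U := le_sup (f := id) (by simp)
    exact union_subset (inter_subset_inter_left hfU) (inter_subset_inter_left htU)
  have hU : U.card ≤ 2 * (t :: T).length + 2 :=
    card_sup_le_of_isChain (List.isChain_cons_cons.mp hL).2
    fun x hx => hE.card_eq x (hLE x (List.mem_cons_of_mem e hx))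
  have hlen := hE.length_le_of_isChain hL hnd hLE
  have hge := hE.card_sup_ge (e :: t :: T).toFinset (fun x hx => hLE x (List.mem_toFinset.mp hx))
  have hunion : (e :: t :: T).toFinset.sup id = e ∪ U := by
    rw [List.toFinset_cons, sup_insert]; rfl
  rw [List.toFinset_card_of_nodup hnd, hunion] at hge
  have := card_le_card hsub
  have := card_sdiff_add_card_inter e U
  have := card_sdiff_add_card e U
  have := hE.card_eq e he
  simp only [List.length_cons] at hU hlen hge
  omega

theorem exists_mem_forall_eq_of_subset_inter (hE : IsSpread ℓ E) (hℓ : 3 ≤ ℓ)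
    {F : Finset (Finset α)} (hFE : F ⊆ E) (hF : F.Nonempty) :
    ∃ e ∈ F, ∃ p : Finset α, ∀ x ∈ F, x ≠ e → ∀ s ⊆ e ∩ x, s.card = 2 → s = p := by
  obtain ⟨e, L, hL, hnd, hLF, hmax⟩ := exists_isChain_nodup_closed (r := Overlap) hF
  have hLE : ∀ y ∈ e :: L, y ∈ E := fun y hy => hFE (hLF y hy)
  refine ⟨e, hLF e (by simp), ?_⟩
  have hon : ∀ x ∈ F, x ≠ e → ∀ s ⊆ e ∩ x, s.card = 2 → Overlap e x ∧ x ∈ L :=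
    fun x hx hxe s hs hs2 =>
      have hov : Overlap e x := show 2 ≤ _ from hs2 ▸ card_le_card hs
      ⟨hov, (List.mem_cons.mp (hmax x hx hov.symm)).resolve_left hxe⟩
  cases L with
  | nil => exact ⟨∅, fun x hx hxe s hs hs2 => by simpa using (hon x hx hxe s hs hs2).2⟩
  | cons t T =>
    refine ⟨e ∩ t, fun x hx hxe s hs hs2 => ?_⟩
    obtain ⟨hov, hxL⟩ := hon x hx hxe s hs hs2
    rw [← hE.inter_eq_of_isChain hℓ hL hnd hLE hxL hov]
    refine eq_of_subset_of_card_le hs ?_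
    rw [hE.card_inter_eq_two hℓ (hLE e (by simp)) (hFE hx) (Ne.symm hxe) hov, hs2]

end IsSpread

section Splitting
variable {α : Type*} [DecidableEq α]

theorem exists_subset_card_eq_two_ne {e : Finset α} (he : e.card = 4) (p : Finset α) :
    ∃ q ⊆ e, q.card = 2 ∧ q ≠ p ∧ e \ q ≠ p := by
  have hcard := le_card_sdiff {p, e \ p} (e.powersetCard 2)
  rw [card_powersetCard, he, show Nat.choose 4 2 = 6 by rfl] at hcard
  have := card_le_two (a := p) (b := e \ p)
  obtain ⟨q, hq⟩ : (e.powersetCard 2 \ {p, e \ p}).Nonempty := card_pos.mp (by omega)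
  simp only [mem_sdiff, mem_powersetCard, mem_insert, mem_singleton, not_or] at hq
  obtain ⟨⟨hqe, hq2⟩, hqp, hqp'⟩ := hq
  exact ⟨q, hqe, hq2, hqp, fun h => hqp' (h ▸ (Finset.sdiff_sdiff_eq_self hqe).symm)⟩

def halves (m : Finset α → Finset α) (e : Finset α) : Finset (Finset α) := {m e, e \ m e}

theorem mem_halves_left (m : Finset α → Finset α) (e : Finset α) : m e ∈ halves m e :=
  mem_insert_self _ _

theorem sdiff_mem_halves (m : Finset α → Finset α) (e : Finset α) : e \ m e ∈ halves m e :=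
  mem_insert_of_mem (mem_singleton_self _)

theorem subset_of_mem_halves {m : Finset α → Finset α} {e s : Finset α} (he : m e ⊆ e)
    (hs : s ∈ halves m e) : s ⊆ e := by
  rcases mem_insert.mp hs with rfl | hs
  · exact he
  · exact mem_singleton.mp hs ▸ sdiff_subset

structure IsSplitting (E : Finset (Finset α)) (m : Finset α → Finset α) : Prop where
  subset : ∀ e ∈ E, m e ⊆ e
  card_eq : ∀ e ∈ E, (m e).card = 2
  card_sdiff : ∀ e ∈ E, (e \ m e).card = 2
  pairwiseDisjoint : (E : Set (Finset α)).PairwiseDisjoint (halves m)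

theorem IsSplitting.insert {F : Finset (Finset α)} {m : Finset α → Finset α} {e q : Finset α}
    (hm : IsSplitting F m) (he : e ∉ F) (hqe : q ⊆ e) (hq : q.card = 2)
    (hq' : (e \ q).card = 2) (hfresh : ∀ x ∈ F, ¬ q ⊆ x ∧ ¬ e \ q ⊆ x) :
    IsSplitting (insert e F) (Function.update m e q) := by
  have hupd : ∀ x ∈ F, Function.update m e q x = m x := fun x hx =>
    Function.update_of_ne (ne_of_mem_of_not_mem hx he) q m
  refine ⟨?_, ?_, ?_, ?_⟩
  · rw [forall_mem_insert, Function.update_self]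
    exact ⟨hqe, fun x hx => hupd x hx ▸ hm.subset x hx⟩
  · rw [forall_mem_insert, Function.update_self]
    exact ⟨hq, fun x hx => hupd x hx ▸ hm.card_eq x hx⟩
  · rw [forall_mem_insert, Function.update_self]
    exact ⟨hq', fun x hx => hupd x hx ▸ hm.card_sdiff x hx⟩
  rw [coe_insert]
  refine (hm.pairwiseDisjoint.mono_on fun x hx => ?_).insert fun x hx _ => ?_
  · simp only [halves, hupd x hx, le_refl]
  rw [disjoint_left]
  intro s hse hsx
  have hsx' : s ⊆ x := subset_of_mem_halves (hm.subset x hx) (by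
    simpa only [halves, hupd x hx] using hsx)
  simp only [halves, Function.update_self, mem_insert, mem_singleton] at hse
  rcases hse with rfl | rfl
  exacts [(hfresh x hx).1 hsx', (hfresh x hx).2 hsx']

theorem IsSpread.exists_isSplitting {ℓ : ℕ} {E : Finset (Finset α)} (hE : IsSpread ℓ E)
    (hℓ : 3 ≤ ℓ) : ∃ m, IsSplitting E m := by
  suffices ∀ F ⊆ E, ∃ m, IsSplitting F m from this E subset_rfl
  intro F
  induction F using Finset.strongInduction with
  | H F ih =>
  intro hFE
  rcases F.eq_empty_or_nonempty with rfl | hF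
  · exact ⟨id, by simp, by simp, by simp, by simp⟩
  obtain ⟨e, heF, p, hp⟩ := hE.exists_mem_forall_eq_of_subset_inter hℓ hFE hF
  obtain ⟨m, hm⟩ := ih (F.erase e) (erase_ssubset heF) ((erase_subset e F).trans hFE)
  have he := hE.card_eq e (hFE heF)
  obtain ⟨q, hqe, hq, hqp, hqp'⟩ := exists_subset_card_eq_two_ne he p
  have hq' : (e \ q).card = 2 := by rw [card_sdiff_of_subset hqe, he, hq]
  have hfresh : ∀ x ∈ F.erase e, ¬ q ⊆ x ∧ ¬ e \ q ⊆ x := fun x hx =>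
    have hp' := hp x (mem_of_mem_erase hx) (ne_of_mem_erase hx)
    ⟨fun h => hqp (hp' q (subset_inter hqe h) hq),
      fun h => hqp' (hp' _ (subset_inter sdiff_subset h) hq')⟩
  exact ⟨_, insert_erase heF ▸ hm.insert (notMem_erase e F) hqe hq hq' hfresh⟩

end Splitting

namespace IsSplitting
variable {α : Type*} [DecidableEq α] {E : Finset (Finset α)} {m : Finset α → Finset α}

theorem eq_of_mem_halves (h : IsSplitting E m) {e e' s : Finset α} (he : e ∈ E) (he' : e' ∈ E)
    (hs : s ∈ halves m e) (hs' : s ∈ halves m e') : e = e' := by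
  by_contra hne
  exact disjoint_left.mp (h.pairwiseDisjoint he he' hne) hs hs'

theorem ne_sdiff (h : IsSplitting E m) {e e' : Finset α} (he : e ∈ E) (he' : e' ∈ E) :
    m e ≠ e' \ m e' := by
  intro heq
  obtain rfl : e = e' :=
    h.eq_of_mem_halves he he' (mem_halves_left m e) (heq ▸ sdiff_mem_halves m e')
  have hdisj : Disjoint (m e) (m e) := by nth_rewrite 1 [heq]; exact sdiff_disjoint
  simpa [disjoint_self.mp hdisj] using h.card_eq e he

theorem mem_powersetCard_of_subset (h : IsSplitting E m) {e S : Finset α} (he : e ∈ E)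
    (heS : e ⊆ S) : m e ∈ S.powersetCard 2 ∧ e \ m e ∈ S.powersetCard 2 :=
  ⟨mem_powersetCard.mpr ⟨(h.subset e he).trans heS, h.card_eq e he⟩,
    mem_powersetCard.mpr ⟨sdiff_subset.trans heS, h.card_sdiff e he⟩⟩

end IsSplitting

section Merge
variable {α : Type*} [DecidableEq α] {E : Finset (Finset α)} {m : Finset α → Finset α}

noncomputable def mergeRep (E : Finset (Finset α)) (m : Finset α → Finset α) (s : Finset α) :
    Finset α :=
  open Classical in if h : ∃ e ∈ E, e \ m e = s then m h.choose else s

theorem mergeRep_eq_self {s : Finset α} (hs : ∀ e ∈ E, e \ m e ≠ s) : mergeRep E m s = s := by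
  rw [mergeRep, dif_neg (by simpa using hs)]

theorem exists_mergeRep_eq {s : Finset α} (hex : ∃ e ∈ E, e \ m e = s) :
    ∃ e ∈ E, e \ m e = s ∧ mergeRep E m s = m e := by
  obtain ⟨he, hes⟩ := hex.choose_spec
  refine ⟨hex.choose, he, hes, ?_⟩
  rw [mergeRep, dif_pos hex]

theorem exists_of_mergeRep_ne {s : Finset α} (hs : mergeRep E m s ≠ s) :
    ∃ e ∈ E, e \ m e = s ∧ mergeRep E m s = m e := by
  refine exists_mergeRep_eq ?_
  by_contra! h
  exact hs (mergeRep_eq_self h)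

theorem disjoint_mergeRep {s : Finset α} (hs : mergeRep E m s ≠ s) :
    Disjoint s (mergeRep E m s) := by
  obtain ⟨e, -, rfl, hrep⟩ := exists_of_mergeRep_ne hs
  rw [hrep]
  exact sdiff_disjoint

namespace IsSplitting

theorem mergeRep_sdiff (h : IsSplitting E m) {e : Finset α} (he : e ∈ E) :
    mergeRep E m (e \ m e) = m e := by
  obtain ⟨e', he', hes, hrep⟩ := exists_mergeRep_eq ⟨e, he, rfl⟩
  rw [hrep, h.eq_of_mem_halves he' he (sdiff_mem_halves m e')
    (by rw [hes]; exact sdiff_mem_halves m e)]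

theorem mergeRep_self (h : IsSplitting E m) {e : Finset α} (he : e ∈ E) :
    mergeRep E m (m e) = m e :=
  mergeRep_eq_self fun _ he' => (h.ne_sdiff he he').symm

theorem eq_of_mergeRep_eq (h : IsSplitting E m) {s t : Finset α}
    (hst : mergeRep E m s = mergeRep E m t) (hs : mergeRep E m s ≠ s)
    (ht : mergeRep E m t ≠ t) : s = t := by
  obtain ⟨e, he, rfl, hse⟩ := exists_of_mergeRep_ne hs
  obtain ⟨e', he', rfl, hte⟩ := exists_of_mergeRep_ne ht
  rw [h.eq_of_mem_halves he he' (mem_halves_left m e)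
    (by rw [← hse, hst, hte]; exact mem_halves_left m e')]

theorem mergeRep_eq_self_iff (h : IsSplitting E m) {s t : Finset α}
    (hst : mergeRep E m s = mergeRep E m t) (hne : s ≠ t) :
    mergeRep E m s = s ↔ mergeRep E m t ≠ t := by
  constructor
  · intro hs ht
    exact hne (hs.symm.trans (hst.trans ht))
  · intro ht
    by_contra hs
    exact hne (h.eq_of_mergeRep_eq hst hs ht)

end IsSplitting

/-- The pairs of `S` whose color is also carried by another pair of `S`. -/
def redundantPairs (E : Finset (Finset α)) (m : Finset α → Finset α) (S : Finset α) :
    Finset (Finset α) :=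
  (E.filter (· ⊆ S)).image fun e => e \ m e

namespace IsSplitting

theorem card_redundantPairs (h : IsSplitting E m) (S : Finset α) :
    (redundantPairs E m S).card = (E.filter (· ⊆ S)).card :=
  card_image_of_injOn fun e he e' he' heq =>
    h.eq_of_mem_halves (mem_filter.mp he).1 (mem_filter.mp he').1 (sdiff_mem_halves m e)
      (by rw [heq]; exact sdiff_mem_halves m e')

theorem redundantPairs_subset (h : IsSplitting E m) (S : Finset α) :
    redundantPairs E m S ⊆ S.powersetCard 2 := by
  simp only [redundantPairs, image_subset_iff, mem_filter]
  exact fun e ⟨he, heS⟩ => (h.mem_powersetCard_of_subset he heS).2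

theorem image_mergeRep_sdiff_redundantPairs (h : IsSplitting E m) (S : Finset α) :
    (S.powersetCard 2 \ redundantPairs E m S).image (mergeRep E m) =
      (S.powersetCard 2).image (mergeRep E m) := by
  refine (image_subset_image sdiff_subset).antisymm fun r hr => ?_
  obtain ⟨s, hs, rfl⟩ := mem_image.mp hr
  by_cases hsR : s ∈ redundantPairs E m S
  · obtain ⟨e, he, rfl⟩ := mem_image.mp hsR
    rw [mem_filter] at he
    refine mem_image.mpr ⟨m e, mem_sdiff.mpr
      ⟨(h.mem_powersetCard_of_subset he.1 he.2).1, fun hmR => ?_⟩, ?_⟩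
    · obtain ⟨e', he', heq⟩ := mem_image.mp hmR
      exact h.ne_sdiff he.1 (mem_filter.mp he').1 heq.symm
    · rw [h.mergeRep_self he.1, h.mergeRep_sdiff he.1]
  · exact mem_image_of_mem _ (mem_sdiff.mpr ⟨hs, hsR⟩)

theorem not_mergeRep_subset (h : IsSplitting E m) {S s : Finset α}
    (hs : s ∈ S.powersetCard 2 \ redundantPairs E m S) (hrep : mergeRep E m s ≠ s) :
    ¬ mergeRep E m s ⊆ S := by
  intro hsub
  obtain ⟨e, he, rfl, hse⟩ := exists_of_mergeRep_ne hrep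
  rw [mem_sdiff, mem_powersetCard] at hs
  refine hs.2 (mem_image.mpr ⟨e, mem_filter.mpr ⟨he, ?_⟩, rfl⟩)
  rw [← union_sdiff_of_subset (h.subset e he)]
  exact union_subset (hse ▸ hsub) hs.1.1

theorem injOn_mergeRep (h : IsSplitting E m) (S : Finset α) :
    Set.InjOn (mergeRep E m) ↑(S.powersetCard 2 \ redundantPairs E m S) := by
  intro s hs t ht hst
  have hsS : s ⊆ S := (mem_powersetCard.mp (mem_sdiff.mp hs).1).1
  have htS : t ⊆ S := (mem_powersetCard.mp (mem_sdiff.mp ht).1).1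
  by_cases hs' : mergeRep E m s = s <;> by_cases ht' : mergeRep E m t = t
  · exact hs'.symm.trans (hst.trans ht')
  · exact absurd (hst ▸ hs'.symm ▸ hsS) (h.not_mergeRep_subset ht ht')
  · exact absurd (hst ▸ ht'.symm ▸ htS) (h.not_mergeRep_subset hs hs')
  · exact h.eq_of_mergeRep_eq hst hs' ht'

theorem card_image_mergeRep_add (h : IsSplitting E m) (S : Finset α) :
    ((S.powersetCard 2).image (mergeRep E m)).card + (E.filter (· ⊆ S)).card =
      S.card.choose 2 := by
  rw [← h.image_mergeRep_sdiff_redundantPairs, card_image_of_injOn (h.injOn_mergeRep S),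
    card_sdiff_of_subset (h.redundantPairs_subset S), ← h.card_redundantPairs S,
    ← card_powersetCard 2 S]
  have := card_le_card (h.redundantPairs_subset S)
  omega

end IsSplitting
end Merge

section Coloring
variable {α : Type*} [DecidableEq α] [Encodable α] {E : Finset (Finset α)}
  {m : Finset α → Finset α}

noncomputable def mergeColoring (E : Finset (Finset α)) (m : Finset α → Finset α)
    (s : Finset α) : ℕ :=
  Encodable.encode (mergeRep E m s)

theorem mergeRep_eq_of_mergeColoring_eq {s t : Finset α}
    (h : mergeColoring E m s = mergeColoring E m t) : mergeRep E m s = mergeRep E m t :=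
  Encodable.encode_injective h

theorem IsSplitting.card_filter_mergeColoring_eq_le_two (h : IsSplitting E m)
    (P : Finset (Finset α)) (c : ℕ) : (P.filter (mergeColoring E m · = c)).card ≤ 2 := by
  by_contra! h3
  obtain ⟨a, ha, b, hb, d, hd, hab, had, hbd⟩ := two_lt_card.mp h3
  simp only [mem_filter] at ha hb hd
  have := h.mergeRep_eq_self_iff (mergeRep_eq_of_mergeColoring_eq (ha.2.trans hb.2.symm)) hab
  have := h.mergeRep_eq_self_iff (mergeRep_eq_of_mergeColoring_eq (ha.2.trans hd.2.symm)) had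
  have := h.mergeRep_eq_self_iff (mergeRep_eq_of_mergeColoring_eq (hb.2.trans hd.2.symm)) hbd
  tauto

theorem IsSplitting.mergeColoring_ne (h : IsSplitting E m) {s t : Finset α} (hne : s ≠ t)
    (hst : (s ∩ t).Nonempty) : mergeColoring E m s ≠ mergeColoring E m t := by
  intro heq
  have hrep := mergeRep_eq_of_mergeColoring_eq heq
  have hiff := h.mergeRep_eq_self_iff hrep hne
  rw [← not_disjoint_iff_nonempty_inter] at hst
  by_cases hs : mergeRep E m s = s
  · have := disjoint_mergeRep (hiff.mp hs)
    rw [← hrep, hs] at this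
    exact hst this.symm
  · have := disjoint_mergeRep hs
    rw [hrep, not_not.mp (mt hiff.mpr hs)] at this
    exact hst this

end Coloring

theorem IsSplitting.card_colorsIn_mergeColoring_add {n : ℕ} {E : Finset (Finset (Fin n))}
    {m : Finset (Fin n) → Finset (Fin n)} (h : IsSplitting E m) (S : Finset (Fin n)) :
    (colorsIn (mergeColoring E m) S).card + (E.filter (· ⊆ S)).card = S.card.choose 2 := by
  rw [← h.card_image_mergeRep_add S, colorsIn,
    show mergeColoring E m = Encodable.encode ∘ mergeRep E m from rfl, ← image_image,
    card_image_of_injective _ Encodable.encode_injective]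

theorem genRamsey_le_card_colorsIn {n p q : ℕ} {β : Type*} [DecidableEq β]
    (χ : Finset (Fin n) → β) (hpn : p ≤ n) (hq : 0 < q)
    (hχ : ∀ S : Finset (Fin n), S.card = p → q ≤ (colorsIn χ S).card) :
    genRamsey n p q ≤ (colorsIn χ univ).card := by
  set C := colorsIn χ univ
  have hsub : ∀ S, colorsIn χ S ⊆ C := fun S =>
    image_subset_image (powersetCard_mono (subset_univ S))
  obtain ⟨S, -, hS⟩ := exists_subset_card_eq (s := (univ : Finset (Fin n))) (by simpa using hpn)
  obtain ⟨c₀, hc₀⟩ : C.Nonempty := (card_pos.mp ((hχ S hS).trans_lt' hq)).mono (hsub S)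
  -- `c₀` is a junk value making `g` total; only `g` on `C` matters
  let g : β → Fin C.card := fun b => if hb : b ∈ C then C.equivFin ⟨b, hb⟩ else C.equivFin ⟨c₀, hc₀⟩
  have hg : Set.InjOn g C := fun a ha b hb hab => by
    rw [mem_coe] at ha hb
    simp only [g, dif_pos ha, dif_pos hb] at hab
    exact congrArg Subtype.val (C.equivFin.injective hab)
  refine Nat.sInf_le ⟨g ∘ χ, fun S hS => ?_⟩
  rw [show colorsIn (g ∘ χ) S = (colorsIn χ S).image g from image_image.symm,
    card_image_of_injOn (hg.mono (hsub S))]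
  exact hχ S hS

theorem exists_card_eq_Hval (n : ℕ) {ℓ : ℕ} (hℓ : 2 ≤ ℓ) :
    ∃ E : Finset (Finset (Fin n)), (∀ e ∈ E, e.card = 4) ∧ IsSKFree (2 * ℓ) (ℓ - 1) E ∧
      (∀ i, 2 ≤ i → i ≤ ℓ - 2 → IsSKFree (2 * i + 1) i E) ∧ E.card = Hval n ℓ := by
  have hmem := Nat.sSup_mem (s := {m : ℕ | ∃ E : Finset (Finset (Fin n)),
      (∀ e ∈ E, e.card = 4) ∧ IsSKFree (2 * ℓ) (ℓ - 1) E ∧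
      (∀ i, 2 ≤ i → i ≤ ℓ - 2 → IsSKFree (2 * i + 1) i E) ∧
      (∀ v : Fin n, (E.filter (fun e => v ∈ e)).card = 0 ∨
        ℓ - 1 ≤ (E.filter (fun e => v ∈ e)).card) ∧
      E.card = m})
    ⟨0, ∅, by simp, fun _ _ => by simp only [filter_empty, card_empty]; omega,
      fun _ hi _ _ _ => by simp only [filter_empty, card_empty]; omega, by simp, rfl⟩
    ⟨_, fun _ ⟨E, _, _, _, _, hE⟩ => hE ▸ card_le_univ E⟩
  obtain ⟨E, h4, hfree, hfree', -, hE⟩ := hmem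
  exact ⟨E, h4, hfree, hfree', hE⟩

theorem le_choose_two_two_mul (ℓ : ℕ) : ℓ ≤ (2 * ℓ).choose 2 := by
  rw [Nat.choose_two_right, Nat.le_div_iff_mul_le two_pos]
  rcases Nat.eq_zero_or_pos ℓ with rfl | hℓ
  · simp
  · calc ℓ * 2 = 2 * ℓ * 1 := by ring
      _ ≤ 2 * ℓ * (2 * ℓ - 1) := Nat.mul_le_mul_left _ (by omega)

/-- For every `ℓ ≥ 3` and `n ≥ 2ℓ`, there is an edge-coloring of `K_n` using exactly
`C(n,2) - H⁽⁴⁾(n; 2ℓ, ℓ-1)` colors in which every set of `2ℓ` vertices spans at least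
`C(2ℓ,2) - ℓ + 2` distinct colors, every color is used on at most two edges, and no two
edges sharing a vertex receive the same color.  In particular,
`f(n, 2ℓ, C(2ℓ,2) - ℓ + 2) ≤ C(n,2) - H⁽⁴⁾(n; 2ℓ, ℓ-1)`. -/
theorem stmt_13 (ℓ : ℕ) (hℓ : 3 ≤ ℓ) (n : ℕ) (hn : 2 * ℓ ≤ n) :
    (∃ χ : Finset (Fin n) → ℕ,
      (colorsIn χ (univ : Finset (Fin n))).card = n.choose 2 - Hval n ℓ ∧
      (∀ S : Finset (Fin n), S.card = 2 * ℓ →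
        (2 * ℓ).choose 2 - ℓ + 2 ≤ (colorsIn χ S).card) ∧
      (∀ c : ℕ,
        (((univ : Finset (Fin n)).powersetCard 2).filter (fun e => χ e = c)).card ≤ 2) ∧
      (∀ e f : Finset (Fin n), e.card = 2 → f.card = 2 → e ≠ f →
        (e ∩ f).Nonempty → χ e ≠ χ f)) ∧
    genRamsey n (2 * ℓ) ((2 * ℓ).choose 2 - ℓ + 2) ≤ n.choose 2 - Hval n ℓ := by
  obtain ⟨E, h4, hfree, hfree', hE⟩ := exists_card_eq_Hval n (by omega : 2 ≤ ℓ)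
  obtain ⟨m, hm⟩ := (isSpread_of_isSKFree hn h4 hfree hfree').exists_isSplitting hℓ
  have htotal : (colorsIn (mergeColoring E m) univ).card = n.choose 2 - Hval n ℓ := by
    have := hm.card_colorsIn_mergeColoring_add univ
    simp only [subset_univ, filter_true, card_univ, Fintype.card_fin, hE] at this
    omega
  have hlocal : ∀ S : Finset (Fin n), S.card = 2 * ℓ →
      (2 * ℓ).choose 2 - ℓ + 2 ≤ (colorsIn (mergeColoring E m) S).card := by
    intro S hS
    have := hm.card_colorsIn_mergeColoring_add S
    have := hfree S hS
    have := le_choose_two_two_mul ℓ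
    rw [hS] at *
    omega
  refine ⟨⟨mergeColoring E m, htotal, hlocal, hm.card_filter_mergeColoring_eq_le_two _,
    fun e f _ _ hne hef => hm.mergeColoring_ne hne hef⟩, ?_⟩
  rw [← htotal]
  exact genRamsey_le_card_colorsIn _ (by omega) (by omega) hlocal
end

section
/- Let n ≥ 6 and let χ be an edge-coloring of K_n such that every set of 6 vertices spans at least 14 distinct colors and no two edges sharing a vertex receive the same color. Then the number of colors used on exactly two edges is at most binom(n,2)/6. -/
open Finset

/-!
A color used on exactly two edges of a proper coloring sits on two disjoint edges, so it spans
four vertices. The spans of two such colors share at most one vertex: otherwise both fit into a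
set of six vertices, whose fifteen edges then carry at most thirteen colors. Hence the pairs
inside these spans are pairwise disjoint, six per color, and there are at most `C(n,2)` pairs.
-/

section Packing

variable {V ι : Type*} [Fintype V] [DecidableEq V]

theorem card_mul_choose_le_of_pairwise_card_inter_lt {T : Finset ι} {φ : ι → Finset V}
    {k r : ℕ} (hk : ∀ i ∈ T, #(φ i) = k)
    (hinter : (T : Set ι).Pairwise fun i j => #(φ i ∩ φ j) < r) :
    #T * k.choose r ≤ (Fintype.card V).choose r := by
  have hdisj : (T : Set ι).PairwiseDisjoint fun i => (φ i).powersetCard r := by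
    intro i hi j hj hij
    refine disjoint_left.mpr fun s hsi hsj => ?_
    rw [mem_powersetCard] at hsi hsj
    have := card_le_card (subset_inter hsi.1 hsj.1)
    have := hinter hi hj hij
    omega
  calc #T * k.choose r
      = #(T.biUnion fun i => (φ i).powersetCard r) := by
        rw [card_biUnion hdisj, sum_congr rfl fun i hi => by rw [card_powersetCard, hk i hi],
          sum_const, smul_eq_mul]
    _ ≤ #((univ : Finset V).powersetCard r) :=
        card_le_card <| biUnion_subset.mpr fun _ _ => powersetCard_mono (subset_univ _)
    _ = (Fintype.card V).choose r := by rw [card_powersetCard, card_univ]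

end Packing

section Image

variable {β γ : Type*} [DecidableEq β] [DecidableEq γ]

theorem Finset.image_erase_of_apply_eq {A : Finset β} {f : β → γ} {a b : β} (ha : a ∈ A)
    (hab : a ≠ b) (h : f a = f b) : (A.erase b).image f = A.image f := by
  refine (image_subset_image (erase_subset b A)).antisymm fun y hy => ?_
  obtain ⟨x, hx, rfl⟩ := mem_image.mp hy
  by_cases hxb : x = b
  · exact mem_image.mpr ⟨a, mem_erase.mpr ⟨hab, ha⟩, hxb ▸ h⟩
  · exact mem_image_of_mem f (mem_erase.mpr ⟨hxb, hx⟩)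

theorem Finset.card_image_add_two_le {A : Finset β} {f : β → γ} {a₁ b₁ a₂ b₂ : β}
    (ha₁ : a₁ ∈ A) (hb₁ : b₁ ∈ A) (ha₂ : a₂ ∈ A) (hb₂ : b₂ ∈ A)
    (hab₁ : a₁ ≠ b₁) (hab₂ : a₂ ≠ b₂) (hf₁ : f a₁ = f b₁) (hf₂ : f a₂ = f b₂)
    (hne : f a₁ ≠ f a₂) : #(A.image f) + 2 ≤ #A := by
  have hb₂' : b₂ ∈ A.erase b₁ := mem_erase.mpr ⟨fun h => hne (by rw [hf₁, hf₂, h]), hb₂⟩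
  have ha₂' : a₂ ∈ A.erase b₁ := mem_erase.mpr ⟨fun h => hne (by rw [hf₁, h]), ha₂⟩
  rw [← image_erase_of_apply_eq ha₁ hab₁ hf₁, ← image_erase_of_apply_eq ha₂' hab₂ hf₂]
  have := card_image_le (s := (A.erase b₁).erase b₂) (f := f)
  have := card_erase_add_one hb₂'
  have := card_erase_add_one hb₁
  omega

end Image

section Coloring

variable {n : ℕ} {α : Type*} [DecidableEq α] (χ : Finset (Fin n) → α)

def colorClass (c : α) : Finset (Finset (Fin n)) :=
  ((univ : Finset (Fin n)).powersetCard 2).filter fun e => χ e = c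

def colorSpan (c : α) : Finset (Fin n) :=
  (colorClass χ c).sup id

def IsProperEdgeColoring : Prop :=
  ∀ e f : Finset (Fin n), e.card = 2 → f.card = 2 → e ≠ f → (e ∩ f).Nonempty → χ e ≠ χ f

variable {χ}

@[simp]
theorem mem_colorClass {c : α} {e : Finset (Fin n)} : e ∈ colorClass χ c ↔ #e = 2 ∧ χ e = c := by
  simp [colorClass]

theorem IsProperEdgeColoring.exists_disjoint_of_card_colorClass_eq_two
    (hχ : IsProperEdgeColoring χ) {c : α} (hc : #(colorClass χ c) = 2) :
    ∃ e f, colorClass χ c = {e, f} ∧ e ≠ f ∧ Disjoint e f := by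
  obtain ⟨e, f, hef, hclass⟩ := card_eq_two.mp hc
  have he : e ∈ colorClass χ c := by simp [hclass]
  have hf : f ∈ colorClass χ c := by simp [hclass]
  rw [mem_colorClass] at he hf
  refine ⟨e, f, hclass, hef, disjoint_iff_inter_eq_empty.mpr ?_⟩
  by_contra hne
  exact hχ e f he.1 hf.1 hef (nonempty_iff_ne_empty.mpr hne) (he.2.trans hf.2.symm)

theorem colorSpan_eq_union {c : α} {e f : Finset (Fin n)} (hclass : colorClass χ c = {e, f}) :
    colorSpan χ c = e ∪ f := by
  simp [colorSpan, hclass]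

theorem IsProperEdgeColoring.card_colorSpan_eq_four (hχ : IsProperEdgeColoring χ) {c : α}
    (hc : #(colorClass χ c) = 2) : #(colorSpan χ c) = 4 := by
  obtain ⟨e, f, hclass, -, hdisj⟩ := hχ.exists_disjoint_of_card_colorClass_eq_two hc
  have he : #e = 2 := (mem_colorClass.mp (hclass ▸ mem_insert_self e {f})).1
  have hf : #f = 2 := (mem_colorClass.mp (hclass ▸ mem_insert_of_mem (mem_singleton_self f))).1
  rw [colorSpan_eq_union hclass, card_union_of_disjoint hdisj, he, hf]

theorem IsProperEdgeColoring.card_colorSpan_inter_le_one (hχ : IsProperEdgeColoring χ)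
    {p : ℕ} (hp : 6 ≤ p) (hpn : p ≤ n)
    (hrep : ∀ S : Finset (Fin n), #S = p → p.choose 2 < #(colorsIn χ S) + 2)
    {c c' : α} (hc : #(colorClass χ c) = 2) (hc' : #(colorClass χ c') = 2) (hne : c ≠ c') :
    #(colorSpan χ c ∩ colorSpan χ c') ≤ 1 := by
  by_contra! hinter
  have hunion : #(colorSpan χ c ∪ colorSpan χ c') ≤ p := by
    have := card_union_add_card_inter (colorSpan χ c) (colorSpan χ c')
    rw [hχ.card_colorSpan_eq_four hc, hχ.card_colorSpan_eq_four hc'] at this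
    omega
  obtain ⟨S, hspanS, -, hS⟩ :=
    exists_subsuperset_card_eq (subset_univ _) hunion (by simpa using hpn)
  obtain ⟨e₁, f₁, hclass₁, hef₁, -⟩ := hχ.exists_disjoint_of_card_colorClass_eq_two hc
  obtain ⟨e₂, f₂, hclass₂, hef₂, -⟩ := hχ.exists_disjoint_of_card_colorClass_eq_two hc'
  rw [colorSpan_eq_union hclass₁, colorSpan_eq_union hclass₂, union_subset_iff,
    union_subset_iff, union_subset_iff] at hspanS
  have hmem : ∀ {d : α} {e f g : Finset (Fin n)}, colorClass χ d = {e, f} →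
      g ∈ ({e, f} : Finset _) → g ⊆ S → g ∈ S.powersetCard 2 ∧ χ g = d := fun hclass hg hgS => by
    rw [← hclass, mem_colorClass] at hg
    exact ⟨mem_powersetCard.mpr ⟨hgS, hg.1⟩, hg.2⟩
  have he₁ := hmem hclass₁ (by simp) hspanS.1.1
  have hf₁ := hmem hclass₁ (by simp) hspanS.1.2
  have he₂ := hmem hclass₂ (by simp) hspanS.2.1
  have hf₂ := hmem hclass₂ (by simp) hspanS.2.2
  have hcolors : #(colorsIn χ S) + 2 ≤ #(S.powersetCard 2) :=
    card_image_add_two_le he₁.1 hf₁.1 he₂.1 hf₂.1 hef₁ hef₂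
      (he₁.2.trans hf₁.2.symm) (he₂.2.trans hf₂.2.symm) (by rw [he₁.2, he₂.2]; exact hne)
  rw [card_powersetCard, hS] at hcolors
  exact absurd (hrep S hS) hcolors.not_gt

end Coloring

/-- If `n ≥ 6` and `χ` is an edge-coloring of `K_n` in which every set of `6` vertices
spans at least `14` colors and no two edges sharing a vertex get the same color, then the
number of colors used on exactly two edges is at most `C(n,2)/6`. -/
theorem stmt_19 {n : ℕ} (hn : 6 ≤ n) {α : Type*} [DecidableEq α]
    (χ : Finset (Fin n) → α)
    (h : ∀ S : Finset (Fin n), S.card = 6 → 14 ≤ (colorsIn χ S).card)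
    (hproper : ∀ e f : Finset (Fin n), e.card = 2 → f.card = 2 → e ≠ f →
      (e ∩ f).Nonempty → χ e ≠ χ f) :
    (((colorsIn χ (univ : Finset (Fin n))).filter
        (fun c =>
          (((univ : Finset (Fin n)).powersetCard 2).filter (fun e => χ e = c)).card = 2)).card
        : ℝ) ≤ (n.choose 2 : ℝ) / 6 := by
  set T := (colorsIn χ univ).filter fun c => #(colorClass χ c) = 2
  have hχ : IsProperEdgeColoring χ := hproper
  have hrep : ∀ S : Finset (Fin n), #S = 6 → (6 : ℕ).choose 2 < #(colorsIn χ S) + 2 :=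
    fun S hS => by have := h S hS; rw [show (6 : ℕ).choose 2 = 15 from rfl]; omega
  have hpacking : #T * (4 : ℕ).choose 2 ≤ (Fintype.card (Fin n)).choose 2 :=
    card_mul_choose_le_of_pairwise_card_inter_lt
      (fun c hc => hχ.card_colorSpan_eq_four (mem_filter.mp hc).2)
      fun c hc c' hc' hne => Nat.lt_succ_of_le <|
        hχ.card_colorSpan_inter_le_one le_rfl hn hrep (mem_filter.mp hc).2
          (mem_filter.mp hc').2 hne
  rw [Fintype.card_fin, show (4 : ℕ).choose 2 = 6 from rfl] at hpacking
  rw [le_div_iff₀ (by norm_num)]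
  exact_mod_cast hpacking
end
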